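/- arXiv:1605.01617 — 4 statements merged into one kernel-verified Lean document; each statement's English description precedes it below -/
import Mathlib

section
/- Suppose u and v are positive solutions of u'' + λ f(u) - h(x) = 0 and v'' + λ₁ f(v) - h(x) = 0 respectively on (-1,1), both vanishing at x = ±1, with the same maximum value u(0) = v(0). Then λ = λ₁ and u ≡ v. In other words, the maximum value u(0) uniquely identifies the solution pair (λ, u). -/
/-!
Let `y(x) ∈ [0,1]` be the point with `v(y(x)) = u(x)` (`levelPoint u v x`), and compare
`Z = y - x` with the energy gap `D = u'² - v'(y)²`. Since `u', v' < 0`, `Z' = u'/v'(y) - 1`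
has the sign of `D`, and the equations give `D' = 2u'(h(x) - h(y) + (λ₁ - λ) f(u))`.
If `λ ≤ λ₁`, then wherever `Z < 0` we have `y < x`, hence `h(y) ≤ h(x)` and `D' ≤ 0`.
At a negative minimum of `Z` we have `D = 0`; going back to the last point where `Z ≥ 0`,
`D` only increases, so `Z` is nondecreasing there, which is absurd. Thus `Z ≥ 0`, i.e. `u ≤ v`.
Then `u - v` has a maximum at `0`, so `(u - v)''(0) = (λ₁ - λ) f(u(0)) ≤ 0` and `λ₁ ≤ λ`.
Exchanging `u` and `v` gives `λ = λ₁` and `u = v`.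
-/

open Set Real Filter Topology Function

theorem IsCompact.continuousOn_invFunOn {α β : Type*} [TopologicalSpace α] [Nonempty α]
    [TopologicalSpace β] [T2Space β] {f : α → β} {s : Set α} (hs : IsCompact s)
    (hf : ContinuousOn f s) (hinj : InjOn f s) : ContinuousOn (invFunOn f s) (f '' s) := by
  refine continuousOn_iff_isClosed.2 fun t ht => ⟨f '' (t ∩ s), ?_, ?_⟩
  · exact ((hs.inter_left ht).image_of_continuousOn (hf.mono inter_subset_right)).isClosed
  ext y
  constructor
  · rintro ⟨hyt, x, hx, rfl⟩
    have hy : f x ∈ f '' s := ⟨x, hx, rfl⟩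
    exact ⟨⟨_, ⟨hyt, invFunOn_mem hy⟩, invFunOn_eq hy⟩, hy⟩
  · rintro ⟨⟨x, ⟨hxt, hx⟩, rfl⟩, -⟩
    exact ⟨show invFunOn f s (f x) ∈ t by rwa [hinj.leftInvOn_invFunOn hx], x, hx, rfl⟩

theorem IsLocalMax.deriv_deriv_nonpos {f : ℝ → ℝ} {x : ℝ} (hmax : IsLocalMax f x)
    (hf : ContinuousAt f x) : deriv (deriv f) x ≤ 0 := by
  by_contra! hpos
  have hmin := isLocalMin_of_deriv_deriv_pos hpos hmax.deriv_eq_zero hf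
  have hconst : f =ᶠ[𝓝 x] fun _ => f x := by
    filter_upwards [hmax, hmin] with y hle hge using le_antisymm hle hge
  exact hpos.ne' (by simpa only [deriv_const'] using hconst.deriv.deriv_eq)

theorem monotoneOn_Ioo_of_mul_deriv_nonneg {h : ℝ → ℝ} {b : ℝ}
    (hh : DifferentiableOn ℝ h (Ioo 0 b)) (hmono : ∀ x ∈ Ioo 0 b, 0 ≤ x * deriv h x) :
    MonotoneOn h (Ioo 0 b) := by
  refine monotoneOn_of_deriv_nonneg (convex_Ioo 0 b) hh.continuousOn (by rwa [interior_Ioo])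
    fun x hx => ?_
  rw [interior_Ioo] at hx
  exact nonneg_of_mul_nonneg_right (hmono x hx) hx.1

theorem div_sub_one_nonneg_iff {a b : ℝ} (ha : a < 0) (hb : b < 0) :
    0 ≤ a / b - 1 ↔ 0 ≤ a ^ 2 - b ^ 2 := by
  rw [sub_nonneg, sub_nonneg, one_le_div_of_neg hb]
  constructor <;> intro <;> nlinarith

theorem forall_mem_Icc_of_even {u v : ℝ → ℝ} (r : ℝ → ℝ → Prop)
    (hu : ∀ x ∈ Icc (-1:ℝ) 1, u (-x) = u x) (hv : ∀ x ∈ Icc (-1:ℝ) 1, v (-x) = v x)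
    (hr : ∀ x ∈ Icc (0:ℝ) 1, r (u x) (v x)) : ∀ x ∈ Icc (-1:ℝ) 1, r (u x) (v x) := by
  intro x hx
  rcases le_total 0 x with hx0 | hx0
  · exact hr x ⟨hx0, hx.2⟩
  · simpa only [hu x hx, hv x hx] using hr (-x) ⟨by linarith, by linarith [hx.1]⟩

theorem nonneg_of_deriv_nonneg_iff {Z Z' D D' : ℝ → ℝ} {a b : ℝ}
    (hZ : ContinuousOn Z (Icc a b)) (hZa : 0 ≤ Z a) (hZb : 0 ≤ Z b)
    (hZ' : ∀ x ∈ Ioo a b, HasDerivAt Z (Z' x) x)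
    (hD : ContinuousOn D (Ico a b)) (hD' : ∀ x ∈ Ioo a b, HasDerivAt D (D' x) x)
    (hsign : ∀ x ∈ Ioo a b, 0 ≤ Z' x ↔ 0 ≤ D x)
    (hD'_nonpos : ∀ x ∈ Ioo a b, Z x < 0 → D' x ≤ 0) :
    ∀ x ∈ Icc a b, 0 ≤ Z x := by
  by_contra! ⟨x, hx, hZx⟩
  obtain ⟨m, hm, hmin⟩ := isCompact_Icc.exists_isMinOn ⟨x, hx⟩ hZ
  have hZm : Z m < 0 := (hmin hx).trans_lt hZx
  have hm' : m ∈ Ioo a b :=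
    ⟨hm.1.lt_of_ne (by rintro rfl; linarith), hm.2.lt_of_ne (by rintro rfl; linarith)⟩
  have hZ'm : Z' m = 0 :=
    (hmin.isLocalMin (Icc_mem_nhds hm'.1 hm'.2)).hasDerivAt_eq_zero (hZ' m hm')
  have hDm : 0 ≤ D m := (hsign m hm').1 hZ'm.ge
  have hclosed : IsClosed (Icc a m ∩ Z ⁻¹' Ici 0) :=
    (hZ.mono (Icc_subset_Icc_right hm.2)).preimage_isClosed_of_isClosed
      isClosed_Icc isClosed_Ici
  obtain ⟨c, ⟨⟨hac, hcm_le⟩, hZc⟩, hc_max⟩ :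
      ∃ c, IsGreatest (Icc a m ∩ Z ⁻¹' Ici 0) c :=
    (isCompact_Icc.of_isClosed_subset hclosed inter_subset_left).exists_isGreatest
      ⟨a, left_mem_Icc.2 hm.1, hZa⟩
  have hcm : c < m := hcm_le.lt_of_ne (by rintro rfl; exact (not_le.2 hZm) hZc)
  have hZneg : ∀ t ∈ Ioo c m, Z t < 0 := fun t ht =>
    not_le.1 fun hZt => not_le.2 ht.1 (hc_max ⟨⟨hac.trans ht.1.le, ht.2.le⟩, hZt⟩)
  have hsub : Ioo c m ⊆ Ioo a b := Ioo_subset_Ioo hac hm'.2.le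
  have hDanti : AntitoneOn D (Icc c m) := by
    refine antitoneOn_of_hasDerivWithinAt_nonpos (f' := D') (convex_Icc c m)
      (hD.mono (Icc_subset_Ico hac hm'.2)) (fun t ht => ?_) (fun t ht => ?_) <;>
      rw [interior_Icc] at ht
    · exact (hD' t (hsub ht)).hasDerivWithinAt
    · exact hD'_nonpos t (hsub ht) (hZneg t ht)
  have hZmono : MonotoneOn Z (Icc c m) := by
    refine monotoneOn_of_hasDerivWithinAt_nonneg (f' := Z') (convex_Icc c m)
      (hZ.mono (Icc_subset_Icc hac hm.2)) (fun t ht => ?_) (fun t ht => ?_) <;>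
      rw [interior_Icc] at ht
    · exact (hZ' t (hsub ht)).hasDerivWithinAt
    · exact (hsign t (hsub ht)).2
        (hDm.trans (hDanti ⟨ht.1.le, ht.2.le⟩ (right_mem_Icc.2 hcm.le) ht.2.le))
  have := hZmono (left_mem_Icc.2 hcm.le) (right_mem_Icc.2 hcm.le) hcm.le
  exact hZm.not_ge (hZc.out.trans this)

structure IsPosSolution (lam : ℝ) (f h u : ℝ → ℝ) : Prop where
  contDiffOn : ContDiffOn ℝ 2 u (Icc (-1) 1)
  pos : ∀ x ∈ Ioo (-1:ℝ) 1, 0 < u x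
  ode : ∀ x ∈ Ioo (-1:ℝ) 1, deriv (deriv u) x + lam * f (u x) - h x = 0
  apply_one : u 1 = 0
  even : ∀ x ∈ Icc (-1:ℝ) 1, u (-x) = u x
  deriv_lt_zero : ∀ x ∈ Ioc (0:ℝ) 1, deriv u x < 0

namespace IsPosSolution

variable {lam : ℝ} {f h u : ℝ → ℝ} {x : ℝ}

theorem hasDerivAt (hu : IsPosSolution lam f h u) (hx : x ∈ Ioo (-1) 1) :
    HasDerivAt u (deriv u x) x :=
  ((hu.contDiffOn.contDiffAt (Icc_mem_nhds hx.1 hx.2)).differentiableAt (by norm_num)).hasDerivAt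

theorem contDiffOn_deriv (hu : IsPosSolution lam f h u) :
    ContDiffOn ℝ 1 (deriv u) (Ioo (-1) 1) :=
  (hu.contDiffOn.mono Ioo_subset_Icc_self).deriv_of_isOpen isOpen_Ioo (by norm_num)

theorem hasDerivAt_deriv (hu : IsPosSolution lam f h u) (hx : x ∈ Ioo (-1) 1) :
    HasDerivAt (deriv u) (h x - lam * f (u x)) x := by
  have hd := ((hu.contDiffOn_deriv.differentiableOn one_ne_zero).differentiableAt
    (isOpen_Ioo.mem_nhds hx)).hasDerivAt
  rwa [show h x - lam * f (u x) = deriv (deriv u) x by linarith [hu.ode x hx]]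

theorem continuousOn (hu : IsPosSolution lam f h u) : ContinuousOn u (Icc 0 1) :=
  hu.contDiffOn.continuousOn.mono (Icc_subset_Icc (by norm_num) le_rfl)

theorem strictAntiOn (hu : IsPosSolution lam f h u) : StrictAntiOn u (Icc 0 1) :=
  strictAntiOn_of_deriv_neg (convex_Icc 0 1) hu.continuousOn
    fun x hx => hu.deriv_lt_zero x (by rw [interior_Icc] at hx; exact ⟨hx.1, hx.2.le⟩)

theorem continuousOn_invFunOn (hu : IsPosSolution lam f h u) :
    ContinuousOn (invFunOn u (Icc 0 1)) (u '' Icc 0 1) :=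
  isCompact_Icc.continuousOn_invFunOn hu.continuousOn hu.strictAntiOn.injOn

theorem Icc_subset_image (hu : IsPosSolution lam f h u) : Icc 0 (u 0) ⊆ u '' Icc 0 1 := by
  simpa only [hu.apply_one] using intermediate_value_Icc' zero_le_one hu.continuousOn

theorem mem_Icc (hu : IsPosSolution lam f h u) (hx : x ∈ Icc 0 1) : u x ∈ Icc 0 (u 0) :=
  ⟨hu.apply_one ▸ hu.strictAntiOn.antitoneOn hx (right_mem_Icc.2 zero_le_one) hx.2,
    hu.strictAntiOn.antitoneOn (left_mem_Icc.2 zero_le_one) hx hx.1⟩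

theorem mem_Ioo (hu : IsPosSolution lam f h u) (hx : x ∈ Ioo 0 1) : u x ∈ Ioo 0 (u 0) :=
  ⟨hu.pos x ⟨by linarith [hx.1], hx.2⟩,
    hu.strictAntiOn (left_mem_Icc.2 zero_le_one) (Ioo_subset_Icc_self hx) hx.1⟩

end IsPosSolution

section Comparison

variable {lam lam1 : ℝ} {f h u v : ℝ → ℝ} {x : ℝ}

noncomputable def levelPoint (u v : ℝ → ℝ) (x : ℝ) : ℝ := invFunOn v (Icc 0 1) (u x)

theorem levelPoint_spec (hu : IsPosSolution lam f h u) (hv : IsPosSolution lam1 f h v)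
    (hmax : u 0 = v 0) (hx : x ∈ Icc 0 1) :
    levelPoint u v x ∈ Icc 0 1 ∧ v (levelPoint u v x) = u x := by
  have : u x ∈ v '' Icc 0 1 := hv.Icc_subset_image (hmax ▸ hu.mem_Icc hx)
  exact ⟨invFunOn_mem this, invFunOn_eq this⟩

theorem levelPoint_one (hu : IsPosSolution lam f h u) (hv : IsPosSolution lam1 f h v)
    (hmax : u 0 = v 0) : levelPoint u v 1 = 1 := by
  obtain ⟨hmem, heq⟩ := levelPoint_spec hu hv hmax (right_mem_Icc.2 zero_le_one)
  exact hv.strictAntiOn.injOn hmem (right_mem_Icc.2 zero_le_one)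
    (heq.trans (hu.apply_one.trans hv.apply_one.symm))

theorem levelPoint_lt_one (hu : IsPosSolution lam f h u) (hv : IsPosSolution lam1 f h v)
    (hmax : u 0 = v 0) (hx : x ∈ Ico 0 1) : levelPoint u v x < 1 := by
  obtain ⟨hmem, heq⟩ := levelPoint_spec hu hv hmax (Ico_subset_Icc_self hx)
  refine hmem.2.lt_of_ne fun hy => ?_
  rw [hy, hv.apply_one] at heq
  linarith [hu.pos x ⟨by linarith [hx.1], hx.2⟩]

theorem continuousOn_levelPoint (hu : IsPosSolution lam f h u) (hv : IsPosSolution lam1 f h v)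
    (hmax : u 0 = v 0) : ContinuousOn (levelPoint u v) (Icc 0 1) :=
  hv.continuousOn_invFunOn.comp hu.continuousOn
    fun _ hx => hv.Icc_subset_image (hmax ▸ hu.mem_Icc hx)

theorem levelPoint_mem_Ioo (hu : IsPosSolution lam f h u) (hv : IsPosSolution lam1 f h v)
    (hmax : u 0 = v 0) (hx : x ∈ Ioo 0 1) : levelPoint u v x ∈ Ioo 0 1 := by
  obtain ⟨hmem, heq⟩ := levelPoint_spec hu hv hmax (Ioo_subset_Icc_self hx)
  refine ⟨hmem.1.lt_of_ne fun hy => ?_, levelPoint_lt_one hu hv hmax (Ioo_subset_Ico_self hx)⟩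
  rw [← hy] at heq
  linarith [(hu.mem_Ioo hx).2]

theorem hasDerivAt_levelPoint (hu : IsPosSolution lam f h u) (hv : IsPosSolution lam1 f h v)
    (hmax : u 0 = v 0) (hx : x ∈ Ioo 0 1) :
    HasDerivAt (levelPoint u v) (deriv u x / deriv v (levelPoint u v x)) x := by
  obtain ⟨hy0, hy1⟩ := levelPoint_mem_Ioo hu hv hmax hx
  obtain ⟨hux0, hux1⟩ := hu.mem_Ioo hx
  have hnhds : Icc 0 (v 0) ∈ 𝓝 (u x) := Icc_mem_nhds hux0 (hmax ▸ hux1)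
  have hinv : HasDerivAt (invFunOn v (Icc 0 1)) (deriv v (levelPoint u v x))⁻¹ (u x) :=
    .of_local_left_inverse
      (hv.continuousOn_invFunOn.continuousAt (mem_of_superset hnhds hv.Icc_subset_image))
      (hv.hasDerivAt ⟨by linarith, hy1⟩) (hv.deriv_lt_zero _ ⟨hy0, hy1.le⟩).ne
      (by filter_upwards [hnhds] with t ht using invFunOn_eq (hv.Icc_subset_image ht))
  rw [div_eq_inv_mul]
  exact hinv.comp x (hu.hasDerivAt ⟨by linarith [hx.1], hx.2⟩)

theorem hasDerivAt_deriv_sq_sub (hu : IsPosSolution lam f h u) (hv : IsPosSolution lam1 f h v)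
    (hmax : u 0 = v 0) (hx : x ∈ Ioo 0 1) :
    HasDerivAt (fun t => deriv u t ^ 2 - deriv v (levelPoint u v t) ^ 2)
      (2 * deriv u x * (h x - h (levelPoint u v x) + (lam1 - lam) * f (u x))) x := by
  obtain ⟨hy0, hy1⟩ := levelPoint_mem_Ioo hu hv hmax hx
  have hvy := (levelPoint_spec hu hv hmax (Ioo_subset_Icc_self hx)).2
  have hv'y : deriv v (levelPoint u v x) ≠ 0 := (hv.deriv_lt_zero _ ⟨hy0, hy1.le⟩).ne
  have hu2 := (hu.hasDerivAt_deriv ⟨by linarith [hx.1], hx.2⟩).pow 2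
  have hv2 := ((hv.hasDerivAt_deriv ⟨by linarith, hy1⟩).comp x
    (hasDerivAt_levelPoint hu hv hmax hx)).pow 2
  refine (hu2.sub hv2).congr_deriv ?_
  simp only [Function.comp_apply, hvy]
  field_simp
  ring

theorem IsPosSolution.le_of_lam_le (hf : ∀ s, 0 < s → 0 ≤ f s)
    (hmono : MonotoneOn h (Ioo 0 1)) (hu : IsPosSolution lam f h u)
    (hv : IsPosSolution lam1 f h v) (hmax : u 0 = v 0) (hle : lam ≤ lam1) :
    ∀ x ∈ Icc (0:ℝ) 1, u x ≤ v x := by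
  have hlevel : ∀ x ∈ Icc (0:ℝ) 1, 0 ≤ levelPoint u v x - x := by
    refine nonneg_of_deriv_nonneg_iff ((continuousOn_levelPoint hu hv hmax).sub continuousOn_id)
      (by simpa using (levelPoint_spec hu hv hmax (left_mem_Icc.2 zero_le_one)).1.1)
      (by simp [levelPoint_one hu hv hmax])
      (fun x hx => (hasDerivAt_levelPoint hu hv hmax hx).sub (hasDerivAt_id x)) ?_
      (fun x hx => hasDerivAt_deriv_sq_sub hu hv hmax hx) ?_ ?_
    · have hIco : Ico (0:ℝ) 1 ⊆ Ioo (-1) 1 := fun x hx => ⟨by linarith [hx.1], hx.2⟩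
      refine ((hu.contDiffOn_deriv.continuousOn.mono hIco).pow 2).sub
        ((hv.contDiffOn_deriv.continuousOn.comp
          ((continuousOn_levelPoint hu hv hmax).mono Ico_subset_Icc_self) fun x hx => ?_).pow 2)
      exact hIco ⟨(levelPoint_spec hu hv hmax (Ico_subset_Icc_self hx)).1.1,
        levelPoint_lt_one hu hv hmax hx⟩
    · intro x hx
      exact div_sub_one_nonneg_iff (hu.deriv_lt_zero x ⟨hx.1, hx.2.le⟩)
        (hv.deriv_lt_zero _ (Ioo_subset_Ioc_self (levelPoint_mem_Ioo hu hv hmax hx)))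
    · intro x hx hneg
      have hhy : h (levelPoint u v x) ≤ h x :=
        hmono (levelPoint_mem_Ioo hu hv hmax hx) hx (by linarith)
      have hfu : 0 ≤ f (u x) := hf _ (hu.mem_Ioo hx).1
      have hu'x : deriv u x < 0 := hu.deriv_lt_zero x ⟨hx.1, hx.2.le⟩
      have : 0 ≤ (lam1 - lam) * f (u x) := mul_nonneg (by linarith) hfu
      nlinarith
  intro x hx
  obtain ⟨hmem, heq⟩ := levelPoint_spec hu hv hmax hx
  calc u x = v (levelPoint u v x) := heq.symm
    _ ≤ v x := hv.strictAntiOn.antitoneOn hx hmem (by linarith [hlevel x hx])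

theorem IsPosSolution.lam_le_of_le (hf : 0 < f (u 0))
    (hu : IsPosSolution lam f h u) (hv : IsPosSolution lam1 f h v) (hmax : u 0 = v 0)
    (hle : ∀ x ∈ Icc (0:ℝ) 1, u x ≤ v x) : lam1 ≤ lam := by
  have h0 : (0:ℝ) ∈ Ioo (-1) 1 := by norm_num
  have hw_max : IsLocalMax (fun x => u x - v x) 0 := by
    filter_upwards [Icc_mem_nhds h0.1 h0.2] with x hx
    linarith [forall_mem_Icc_of_even (· ≤ ·) hu.even hv.even hle x hx]
  have hw' : deriv (fun x => u x - v x) =ᶠ[𝓝 0] fun x => deriv u x - deriv v x := by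
    filter_upwards [Ioo_mem_nhds h0.1 h0.2] with x hx
    exact ((hu.hasDerivAt hx).sub (hv.hasDerivAt hx)).deriv
  have hw'' : deriv (deriv fun x => u x - v x) 0 =
      (h 0 - lam * f (u 0)) - (h 0 - lam1 * f (v 0)) :=
    (((hu.hasDerivAt_deriv h0).sub (hv.hasDerivAt_deriv h0)).congr_of_eventuallyEq hw').deriv
  have := hw_max.deriv_deriv_nonpos ((hu.hasDerivAt h0).sub (hv.hasDerivAt h0)).continuousAt
  rw [hw'', ← hmax] at this
  nlinarith

end Comparison

theorem max_value_global_parameter_in_lambda_general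
    (lam lam1 : ℝ) (f h u v : ℝ → ℝ)
    (hfpos : ∀ s : ℝ, 0 < s → 0 < f s)
    (hh2 : ContDiffOn ℝ 1 h (Ioo (-1) 1))
    (hhmono : ∀ x ∈ Ioo (-1:ℝ) 1, 0 ≤ x * deriv h x)
    (hu : ContDiffOn ℝ 2 u (Icc (-1) 1))
    (hupos : ∀ x ∈ Ioo (-1:ℝ) 1, 0 < u x)
    (hueq : ∀ x ∈ Ioo (-1:ℝ) 1, deriv (deriv u) x + lam * f (u x) - h x = 0)
    (hubc2 : u 1 = 0)
    (hueven : ∀ x ∈ Icc (-1:ℝ) 1, u (-x) = u x)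
    (hudec : ∀ x ∈ Ioc (0:ℝ) 1, deriv u x < 0)
    (hv : ContDiffOn ℝ 2 v (Icc (-1) 1))
    (hvpos : ∀ x ∈ Ioo (-1:ℝ) 1, 0 < v x)
    (hveq : ∀ x ∈ Ioo (-1:ℝ) 1, deriv (deriv v) x + lam1 * f (v x) - h x = 0)
    (hvbc2 : v 1 = 0)
    (hveven : ∀ x ∈ Icc (-1:ℝ) 1, v (-x) = v x)
    (hvdec : ∀ x ∈ Ioc (0:ℝ) 1, deriv v x < 0)
    (hmax : u 0 = v 0) :
    lam = lam1 ∧ EqOn u v (Icc (-1) 1) := by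
  have hsub : Ioo (0:ℝ) 1 ⊆ Ioo (-1) 1 := Ioo_subset_Ioo_left (by norm_num)
  have hmono : MonotoneOn h (Ioo 0 1) :=
    monotoneOn_Ioo_of_mul_deriv_nonneg ((hh2.differentiableOn one_ne_zero).mono hsub)
      fun x hx => hhmono x (hsub hx)
  have su : IsPosSolution lam f h u := ⟨hu, hupos, hueq, hubc2, hueven, hudec⟩
  have sv : IsPosSolution lam1 f h v := ⟨hv, hvpos, hveq, hvbc2, hveven, hvdec⟩
  have hf : ∀ s, 0 < s → 0 ≤ f s := fun s hs => (hfpos s hs).le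
  have huv := su.le_of_lam_le hf hmono sv hmax
  have hvu := sv.le_of_lam_le hf hmono su hmax.symm
  have hlam : lam = lam1 := by
    rcases le_total lam lam1 with hle | hle
    · exact hle.antisymm (su.lam_le_of_le (hfpos _ (hupos 0 (by norm_num))) sv hmax (huv hle))
    · exact (sv.lam_le_of_le (hfpos _ (hvpos 0 (by norm_num))) su hmax.symm (hvu hle)).antisymm hle
  subst hlam
  exact ⟨rfl, forall_mem_Icc_of_even (· = ·) hueven hveven fun x hx =>
    (huv le_rfl x hx).antisymm (hvu le_rfl x hx)⟩

theorem max_value_global_parameter_in_lambda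
    (lam lam1 : ℝ) (f h u v : ℝ → ℝ)
    (hlam : 0 < lam) (hlam1 : 0 < lam1)
    (hf : Continuous f) (hfpos : ∀ s : ℝ, 0 < s → 0 < f s)
    (hh1 : ContinuousOn h (Icc (-1) 1))
    (hh2 : ContDiffOn ℝ 1 h (Ioo (-1) 1))
    (hheven : ∀ x ∈ Ioo (0:ℝ) 1, h (-x) = h x)
    (hh0 : 0 < h 0)
    (hhmono : ∀ x ∈ Ioo (-1:ℝ) 1, 0 ≤ x * deriv h x)
    (hu : ContDiffOn ℝ 2 u (Icc (-1) 1))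
    (hupos : ∀ x ∈ Ioo (-1:ℝ) 1, 0 < u x)
    (hueq : ∀ x ∈ Ioo (-1:ℝ) 1, deriv (deriv u) x + lam * f (u x) - h x = 0)
    (hubc1 : u (-1) = 0) (hubc2 : u 1 = 0)
    (hueven : ∀ x ∈ Icc (-1:ℝ) 1, u (-x) = u x)
    (hudec : ∀ x ∈ Ioc (0:ℝ) 1, deriv u x < 0)
    (hv : ContDiffOn ℝ 2 v (Icc (-1) 1))
    (hvpos : ∀ x ∈ Ioo (-1:ℝ) 1, 0 < v x)
    (hveq : ∀ x ∈ Ioo (-1:ℝ) 1, deriv (deriv v) x + lam1 * f (v x) - h x = 0)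
    (hvbc1 : v (-1) = 0) (hvbc2 : v 1 = 0)
    (hveven : ∀ x ∈ Icc (-1:ℝ) 1, v (-x) = v x)
    (hvdec : ∀ x ∈ Ioc (0:ℝ) 1, deriv v x < 0)
    (hmax : u 0 = v 0) :
    lam = lam1 ∧ EqOn u v (Icc (-1) 1) :=
  max_value_global_parameter_in_lambda_general lam lam1 f h u v hfpos hh2 hhmono hu hupos hueq hubc2
    hueven hudec hv hvpos hveq hvbc2 hveven hvdec hmax
end

section
/- Let u be a positive solution of u'' + λ f(u) - μ g(x) = 0 on (-1,1) with u(±1) = 0, and let w be a nontrivial solution of the linearized problem w'' + λ f'(u(x)) w = 0, w(-1) = w(1) = 0. Then w is of one sign: after possibly replacing w by -w, w(x) > 0 for all x ∈ (-1,1). -/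
/-!
Write `q = λ f'(u)`. Differentiating the equation for `u` shows that `P = -u'`, which is positive
on `(0, 1]`, satisfies `P'' + q P = -μ g' ≤ 0` on `(0, 1)`. For a solution `v` of `v'' + q v = 0`
the Wronskian `W = v P' - v' P` then has `W' = v (P'' + q P)`. If `v(0) > 0` and `v(1) = 0` but
`v` vanishes first at some `b < 1`, uniqueness for the linear ODE gives `v'(b) < 0`, so `v < 0` on
an interval `(b, β)` with `v(β) = 0`. There `W` grows from `W(b) = -v'(b) P(b) ≥ 0`, so
`(v / P)' = -W / P² ≤ 0`, and `v / P`, which vanishes at `β`, cannot be negative on `(b, β)`.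

Hence `w > 0` on `[0, 1)` when `w(0) > 0` and, by evenness, on `(-1, 1)`; the case `w(0) < 0` is the
same for `-w`, and `w(0) = 0 = w'(0)` would force `w ≡ 0` by uniqueness.
-/

open Set Filter Topology

theorem ContinuousOn.exists_first_zero {v : ℝ → ℝ} {a c : ℝ} (hv : ContinuousOn v (Icc a c))
    (hac : a ≤ c) (hva : 0 < v a) (hvc : v c = 0) :
    ∃ b ∈ Ioc a c, v b = 0 ∧ ∀ x ∈ Ico a b, 0 < v x := by
  have hZ : IsCompact (Icc a c ∩ v ⁻¹' {0}) := isCompact_Icc.of_isClosed_subset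
    (hv.preimage_isClosed_of_isClosed isClosed_Icc isClosed_singleton) inter_subset_left
  obtain ⟨b, ⟨hb, hvb⟩, hleast⟩ := hZ.exists_isLeast ⟨c, ⟨hac, le_rfl⟩, hvc⟩
  have hvb : v b = 0 := hvb
  refine ⟨b, ⟨hb.1.lt_of_ne ?_, hb.2⟩, hvb, fun x hx => ?_⟩
  · rintro rfl
    linarith
  by_contra! hvx
  obtain ⟨z, hz, hvz⟩ := intermediate_value_Icc' hx.1
    (hv.mono (Icc_subset_Icc le_rfl (hx.2.le.trans hb.2))) ⟨hvx, hva.le⟩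
  linarith [hleast ⟨⟨hz.1, by linarith [hz.2, hx.2, hb.2]⟩, hvz⟩, hz.2, hx.2]

section Deriv

variable {𝕜 F : Type*} [NontriviallyNormedField 𝕜] [NormedAddCommGroup F] [NormedSpace 𝕜 F]
  {f : 𝕜 → F} {s t : Set 𝕜}

theorem ContDiffOn.hasDerivAt_deriv {x : 𝕜} (hf : ContDiffOn 𝕜 2 f s) (hs : s ∈ 𝓝 x) :
    HasDerivAt (deriv f) (deriv (deriv f) x) x :=
  (((hf.contDiffAt hs).derivWithin (m := 1) (by norm_num)).differentiableAt one_ne_zero).hasDerivAt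

theorem ContDiffOn.continuousOn_deriv_of_differentiableAt (hf : ContDiffOn 𝕜 1 f s)
    (hs : UniqueDiffOn 𝕜 s) (hts : t ⊆ s) (hd : ∀ x ∈ t, DifferentiableAt 𝕜 f x) :
    ContinuousOn (deriv f) t :=
  ((hf.continuousOn_derivWithin hs le_rfl).mono hts).congr fun x hx =>
    ((hd x hx).derivWithin (hs x (hts hx))).symm

end Deriv

def SolvesLinearODE (q v v' : ℝ → ℝ) (s : Set ℝ) : Prop :=
  ∀ x ∈ s, HasDerivAt v (v' x) x ∧ HasDerivAt v' (-(q x * v x)) x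

namespace SolvesLinearODE

variable {q v v' : ℝ → ℝ} {s t : Set ℝ}

theorem mono (hv : SolvesLinearODE q v v' s) (hts : t ⊆ s) : SolvesLinearODE q v v' t :=
  fun x hx => hv x (hts hx)

theorem neg (hv : SolvesLinearODE q v v' s) : SolvesLinearODE q (-v) (-v') s := fun x hx => by
  refine ⟨(hv x hx).1.neg, ?_⟩
  simpa using (hv x hx).2.neg

theorem of_contDiffOn (hv : ContDiffOn ℝ 2 v t) (hst : s ⊆ interior t)
    (heq : ∀ x ∈ s, deriv (deriv v) x + q x * v x = 0) : SolvesLinearODE q v (deriv v) s :=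
  fun x hx =>
    have ht : t ∈ 𝓝 x := mem_interior_iff_mem_nhds.1 (hst hx)
    ⟨((hv.contDiffAt ht).differentiableAt (by norm_num)).hasDerivAt,
      (hv.hasDerivAt_deriv ht).congr_deriv (by linarith [heq x hx])⟩

/-- The system `(v, v')' = (v', -q v)` is Lipschitz in the state, uniformly in time. -/
theorem eqOn_zero {a c t₀ : ℝ} (hv : SolvesLinearODE q v v' (Ioo a c))
    (hq : ContinuousOn q (Icc a c)) (ht₀ : t₀ ∈ Ioo a c) (h₀ : v t₀ = 0) (h₀' : v' t₀ = 0) :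
    EqOn v 0 (Ioo a c) := by
  obtain ⟨C, hC⟩ := isCompact_Icc.exists_bound_of_continuousOn hq
  have hlip : ∀ τ ∈ Ioo a c, LipschitzOnWith (max 1 C.toNNReal)
      (fun p : ℝ × ℝ => (p.2, -(q τ * p.1))) univ := fun τ hτ => by
    refine (LipschitzWith.prod_snd.prodMk (LipschitzWith.of_dist_le_mul fun p p' => ?_))
      |>.lipschitzOnWith
    have hCτ : |q τ| ≤ C := by simpa using hC τ (Ioo_subset_Icc_self hτ)
    rw [Real.dist_eq, Prod.dist_eq, Real.dist_eq,
      show -(q τ * p.1) - -(q τ * p'.1) = -(q τ * (p.1 - p'.1)) by ring, abs_neg, abs_mul]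
    gcongr
    · exact hCτ.trans (Real.le_coe_toNNReal C)
    · exact le_max_left _ _
  have hzero := ODE_solution_unique_of_mem_Ioo hlip ht₀
    (f := fun τ => (v τ, v' τ)) (g := fun _ => 0)
    (fun τ hτ => ⟨(hv τ hτ).1.prodMk (hv τ hτ).2, mem_univ _⟩)
    (fun τ _ => ⟨by convert hasDerivAt_const τ (0 : ℝ × ℝ) using 1; simp, mem_univ _⟩)
    (by simp [h₀, h₀'])
  exact fun τ hτ => congrArg Prod.fst (hzero hτ)

theorem exists_nonneg_of_supersolution {P P' P'' : ℝ → ℝ} {b β : ℝ}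
    (hv : SolvesLinearODE q v v' (Ico b β)) (hvc : ContinuousOn v (Icc b β)) (hbβ : b < β)
    (hvb : v b = 0) (hvβ : v β = 0) (hP : ContinuousOn P (Icc b β))
    (hPpos : ∀ x ∈ Icc b β, 0 < P x) (hP' : ∀ x ∈ Ico b β, HasDerivAt P (P' x) x)
    (hP'' : ∀ x ∈ Ico b β, HasDerivAt P' (P'' x) x)
    (hsuper : ∀ x ∈ Ioo b β, P'' x + q x * P x ≤ 0) :
    ∃ x ∈ Ioo b β, 0 ≤ v x := by
  by_contra! hneg
  set W := fun x => v x * P' x - v' x * P x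
  have hW : ∀ x ∈ Ico b β, HasDerivAt W (v x * (P'' x + q x * P x)) x := fun x hx =>
    ((hv x hx).1.mul (hP'' x hx)).sub ((hv x hx).2.mul (hP' x hx)) |>.congr_deriv (by ring)
  have hv'b : v' b ≤ 0 := by
    refine le_of_tendsto ((hasDerivAt_iff_tendsto_slope.1 (hv b ⟨le_rfl, hbβ⟩).1).mono_left
      (nhdsGT_le_nhdsNE b)) ?_
    filter_upwards [Ioo_mem_nhdsGT hbβ] with x hx
    rw [slope_def_field, hvb, sub_zero]
    exact (div_neg_of_neg_of_pos (hneg x hx) (sub_pos.2 hx.1)).le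
  have hWb : 0 ≤ W b := by
    have := hPpos b (left_mem_Icc.2 hbβ.le)
    simp only [W, hvb, zero_mul, zero_sub]
    nlinarith
  have hWmono : MonotoneOn W (Ico b β) := by
    refine monotoneOn_of_deriv_nonneg (convex_Ico b β)
      (fun x hx => (hW x hx).continuousAt.continuousWithinAt) ?_ ?_ <;> rw [interior_Ico]
    · exact fun x hx => (hW x (Ioo_subset_Ico_self hx)).differentiableAt.differentiableWithinAt
    · intro x hx
      rw [(hW x (Ioo_subset_Ico_self hx)).deriv]
      exact mul_nonneg_of_nonpos_of_nonpos (hneg x hx).le (hsuper x hx)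
  have hratio : AntitoneOn (v / P) (Icc b β) := by
    have hdiv : ∀ x ∈ Ioo b β, HasDerivAt (v / P) ((v' x * P x - v x * P' x) / P x ^ 2) x :=
      fun x hx => (hv x (Ioo_subset_Ico_self hx)).1.div (hP' x (Ioo_subset_Ico_self hx))
        (hPpos x (Ioo_subset_Icc_self hx)).ne'
    refine antitoneOn_of_deriv_nonpos (convex_Icc b β)
      (hvc.div hP fun x hx => (hPpos x hx).ne') ?_ ?_ <;> rw [interior_Icc]
    · exact fun x hx => (hdiv x hx).differentiableAt.differentiableWithinAt
    · intro x hx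
      rw [(hdiv x hx).deriv]
      have := hWmono ⟨le_rfl, hbβ⟩ (Ioo_subset_Ico_self hx) hx.1.le
      exact div_nonpos_of_nonpos_of_nonneg (by linarith) (sq_nonneg _)
  obtain ⟨m, hm⟩ := nonempty_Ioo.2 hbβ
  have hvm := hratio (Ioo_subset_Icc_self hm) (right_mem_Icc.2 hbβ.le) hm.2.le
  rw [Pi.div_apply, Pi.div_apply, hvβ, zero_div,
    le_div_iff₀ (hPpos m (Ioo_subset_Icc_self hm)), zero_mul] at hvm
  exact (hneg m hm).not_ge hvm

theorem pos_of_supersolution {P P' P'' : ℝ → ℝ} {a c : ℝ} (hq : ContinuousOn q (Icc a c))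
    (hv : SolvesLinearODE q v v' (Ioo a c)) (hvc : ContinuousOn v (Icc a c)) (hac : a ≤ c)
    (hva : 0 < v a) (hvc0 : v c = 0) (hP : ContinuousOn P (Ioc a c))
    (hPpos : ∀ x ∈ Ioc a c, 0 < P x) (hP' : ∀ x ∈ Ioo a c, HasDerivAt P (P' x) x)
    (hP'' : ∀ x ∈ Ioo a c, HasDerivAt P' (P'' x) x)
    (hsuper : ∀ x ∈ Ioo a c, P'' x + q x * P x ≤ 0) :
    ∀ x ∈ Ico a c, 0 < v x := by
  obtain ⟨b, hb, hvb, hpos⟩ := hvc.exists_first_zero hac hva hvc0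
  rcases hb.2.eq_or_lt with rfl | hbc
  · exact hpos
  have hbI : b ∈ Ioo a c := ⟨hb.1, hbc⟩
  have hslope := hasDerivAt_iff_tendsto_slope.1 (hv b hbI).1
  have hv'b_nonpos : v' b ≤ 0 := by
    refine le_of_tendsto (hslope.mono_left (nhdsLT_le_nhdsNE b)) ?_
    filter_upwards [Ioo_mem_nhdsLT hb.1] with x hx
    rw [slope_def_field, hvb, sub_zero]
    exact (div_neg_of_pos_of_neg (hpos x ⟨hx.1.le, hx.2⟩) (sub_neg.2 hx.2)).le
  have hv'b_ne : v' b ≠ 0 := fun h => by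
    obtain ⟨m, hm⟩ := nonempty_Ioo.2 hb.1
    exact (hpos m ⟨hm.1.le, hm.2⟩).ne' (hv.eqOn_zero hq hbI hvb h ⟨hm.1, hm.2.trans hbc⟩)
  obtain ⟨b', hbb', hneg⟩ : ∃ b' ∈ Ioi b, Ioc b b' ⊆ {x | v x < 0 ∧ x < c} := by
    refine mem_nhdsGT_iff_exists_Ioc_subset.1 ?_
    filter_upwards [(hslope.mono_left (nhdsGT_le_nhdsNE b)).eventually
      (eventually_lt_nhds (hv'b_nonpos.lt_of_ne hv'b_ne)), Ioo_mem_nhdsGT hbc] with x hs hx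
    rw [slope_def_field, hvb, sub_zero, div_neg_iff] at hs
    exact ⟨by rcases hs with hs | hs <;> linarith [hs.1, hs.2, hx.1], hx.2⟩
  have hvb' := hneg ⟨hbb', le_rfl⟩
  obtain ⟨β, hβ, hvβ, hnegβ⟩ := (hvc.neg.mono (Icc_subset_Icc (hb.1.trans hbb').le le_rfl))
    |>.exists_first_zero hvb'.2.le (by simpa using hvb'.1) (by simp [hvc0])
  have hIco : Ico b β ⊆ Ioo a c := fun x hx => ⟨hb.1.trans_le hx.1, hx.2.trans_le hβ.2⟩
  have hIcc : Icc b β ⊆ Ioc a c := fun x hx => ⟨hb.1.trans_le hx.1, hx.2.trans hβ.2⟩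
  obtain ⟨x, hx, hvx⟩ := (hv.mono hIco).exists_nonneg_of_supersolution
    (hvc.mono (hIcc.trans Ioc_subset_Icc_self)) (hbb'.trans hβ.1) hvb (neg_eq_zero.1 hvβ)
    (hP.mono hIcc) (fun x hx => hPpos x (hIcc hx)) (fun x hx => hP' x (hIco hx))
    (fun x hx => hP'' x (hIco hx)) (fun x hx => hsuper x (hIco (Ioo_subset_Ico_self hx)))
  rcases le_or_gt x b' with h | h
  · exact absurd hvx (hneg ⟨hx.1, h⟩).1.not_ge
  · exact absurd hvx (neg_pos.1 (hnegβ x ⟨h.le, hx.2⟩)).not_ge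

end SolvesLinearODE

theorem linearized_pos_on_Ico {lam mu a c : ℝ} {f g u v v' : ℝ → ℝ} (hac : a < c) (hmu : 0 ≤ mu)
    (hf : ContDiff ℝ 1 f) (hg : DifferentiableOn ℝ g (Ioo a c))
    (hg' : ∀ x ∈ Ioo a c, 0 ≤ deriv g x) (hu : ContDiffOn ℝ 2 u (Icc a c))
    (hueq : ∀ x ∈ Ioo a c, deriv (deriv u) x + lam * f (u x) - mu * g x = 0)
    (hudec : ∀ x ∈ Ioc a c, deriv u x < 0)
    (hv : SolvesLinearODE (fun x => lam * deriv f (u x)) v v' (Ioo a c))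
    (hvc : ContinuousOn v (Icc a c)) (hva : 0 < v a) (hvc0 : v c = 0) :
    ∀ x ∈ Ico a c, 0 < v x := by
  have hnhds : ∀ x ∈ Ioo a c, Icc a c ∈ 𝓝 x := fun x hx => Icc_mem_nhds hx.1 hx.2
  have hu' : ∀ x ∈ Ioo a c, HasDerivAt u (deriv u x) x := fun x hx =>
    ((hu.contDiffAt (hnhds x hx)).differentiableAt (by norm_num)).hasDerivAt
  have hu''' : ∀ x ∈ Ioo a c, HasDerivAt (deriv (deriv u))
      (mu * deriv g x - lam * (deriv f (u x) * deriv u x)) x := fun x hx => by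
    have hrhs := ((hg.differentiableAt (isOpen_Ioo.mem_nhds hx)).hasDerivAt.const_mul mu).sub
      ((((hf.differentiable one_ne_zero) (u x)).hasDerivAt.comp x (hu' x hx)).const_mul lam)
    refine hrhs.congr_of_eventuallyEq ?_
    filter_upwards [isOpen_Ioo.mem_nhds hx] with y hy
    show deriv (deriv u) y = mu * g y - lam * f (u y)
    linarith [hueq y hy]
  have hq : ContinuousOn (fun x => lam * deriv f (u x)) (Icc a c) :=
    (continuous_const.mul (hf.continuous_deriv le_rfl)).comp_continuousOn hu.continuousOn
  refine hv.pos_of_supersolution (P := fun x => -deriv u x) (P' := fun x => -deriv (deriv u) x)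
    hq hvc hac.le hva hvc0 ?_ (fun x hx => neg_pos.2 (hudec x hx))
    (fun x hx => (hu.hasDerivAt_deriv (hnhds x hx)).neg) (fun x hx => (hu''' x hx).neg) ?_
  · exact (hu.of_le (by norm_num)).continuousOn_deriv_of_differentiableAt (uniqueDiffOn_Icc hac)
      Ioc_subset_Icc_self (fun x hx => differentiableAt_of_deriv_ne_zero (hudec x hx).ne) |>.neg
  · intro x hx
    linarith [mul_nonneg hmu (hg' x hx)]

theorem pos_on_Ioo_of_even {v : ℝ → ℝ} {c : ℝ} (hv : ∀ x ∈ Icc (-c) c, v (-x) = v x)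
    (hpos : ∀ x ∈ Ico 0 c, 0 < v x) : ∀ x ∈ Ioo (-c) c, 0 < v x := fun x hx => by
  rcases le_or_gt 0 x with h | h
  · exact hpos x ⟨h, hx.2⟩
  · rw [← hv x (Ioo_subset_Icc_self hx)]
    exact hpos (-x) ⟨by linarith, by linarith [hx.1]⟩

theorem linearized_solution_one_sign_general
    (lam mu : ℝ) (f g u w : ℝ → ℝ)
    (hmu : 0 < mu)
    (hf : ContDiff ℝ 1 f)
    (hg2 : ContDiffOn ℝ 1 g (Ioo (-1) 1))
    (hgmono : ∀ x ∈ Ioo (-1:ℝ) 1, 0 ≤ x * deriv g x)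
    (hu : ContDiffOn ℝ 2 u (Icc (-1) 1))
    (hueq : ∀ x ∈ Ioo (-1:ℝ) 1, deriv (deriv u) x + lam * f (u x) - mu * g x = 0)
    (hudec : ∀ x ∈ Ioc (0:ℝ) 1, deriv u x < 0)
    (hw : ContDiffOn ℝ 2 w (Icc (-1) 1))
    (hweq : ∀ x ∈ Ioo (-1:ℝ) 1, deriv (deriv w) x + lam * deriv f (u x) * w x = 0)
    (hwbc2 : w 1 = 0)
    (hweven : ∀ x ∈ Icc (-1:ℝ) 1, w (-x) = w x)
    (hw0 : deriv w 0 = 0)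
    (hwnontriv : ∃ x ∈ Ioo (-1:ℝ) 1, w x ≠ 0) :
    (∀ x ∈ Ioo (-1:ℝ) 1, 0 < w x) ∨ (∀ x ∈ Ioo (-1:ℝ) 1, w x < 0) := by
  have hw_sol : SolvesLinearODE (fun x => lam * deriv f (u x)) w (deriv w) (Ioo (-1) 1) :=
    .of_contDiffOn hw interior_Icc.superset hweq
  have hright : Icc (0:ℝ) 1 ⊆ Icc (-1) 1 := Icc_subset_Icc_left (by norm_num)
  have key : ∀ {v v' : ℝ → ℝ}, SolvesLinearODE (fun x => lam * deriv f (u x)) v v' (Ioo (-1) 1) →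
      ContinuousOn v (Icc (-1) 1) → (∀ x ∈ Icc (-1:ℝ) 1, v (-x) = v x) → 0 < v 0 → v 1 = 0 →
      ∀ x ∈ Ioo (-1:ℝ) 1, 0 < v x := fun hv hvc hveven hv0 hv1 =>
    pos_on_Ioo_of_even hveven <| linearized_pos_on_Ico one_pos hmu.le hf
      ((hg2.differentiableOn one_ne_zero).mono (Ioo_subset_Ioo_left (by norm_num)))
      (fun x hx => nonneg_of_mul_nonneg_right (hgmono x ⟨by linarith [hx.1], hx.2⟩) hx.1)
      (hu.mono hright) (fun x hx => hueq x ⟨by linarith [hx.1], hx.2⟩) hudec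
      (hv.mono (Ioo_subset_Ioo_left (by norm_num))) (hvc.mono hright) hv0 hv1
  rcases lt_trichotomy (w 0) 0 with h | h | h
  · refine .inr fun x hx => neg_pos.1 ?_
    exact key hw_sol.neg hw.continuousOn.neg (fun x hx => by simp [hweven x hx]) (neg_pos.2 h)
      (by simp [hwbc2]) x hx
  · obtain ⟨x, hx, hwx⟩ := hwnontriv
    have hq : ContinuousOn (fun x => lam * deriv f (u x)) (Icc (-1) 1) :=
      (continuous_const.mul (hf.continuous_deriv le_rfl)).comp_continuousOn hu.continuousOn
    exact absurd (hw_sol.eqOn_zero hq ⟨by norm_num, by norm_num⟩ h hw0 hx) hwx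
  · exact .inl (key hw_sol hw.continuousOn hweven h hwbc2)

theorem linearized_solution_one_sign
    (lam mu : ℝ) (f g u w : ℝ → ℝ)
    (hlam : 0 < lam) (hmu : 0 < mu)
    (hf : ContDiff ℝ 1 f)
    (hg1 : ContinuousOn g (Icc (-1) 1))
    (hg2 : ContDiffOn ℝ 1 g (Ioo (-1) 1))
    (hgeven : ∀ x ∈ Ioo (-1:ℝ) 1, g (-x) = g x)
    (hg0 : 0 < g 0)
    (hgmono : ∀ x ∈ Ioo (-1:ℝ) 1, 0 ≤ x * deriv g x)
    (hu : ContDiffOn ℝ 2 u (Icc (-1) 1))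
    (hupos : ∀ x ∈ Ioo (-1:ℝ) 1, 0 < u x)
    (hueq : ∀ x ∈ Ioo (-1:ℝ) 1, deriv (deriv u) x + lam * f (u x) - mu * g x = 0)
    (hubc1 : u (-1) = 0) (hubc2 : u 1 = 0)
    (hueven : ∀ x ∈ Icc (-1:ℝ) 1, u (-x) = u x)
    (hudec : ∀ x ∈ Ioc (0:ℝ) 1, deriv u x < 0)
    (hw : ContDiffOn ℝ 2 w (Icc (-1) 1))
    (hweq : ∀ x ∈ Ioo (-1:ℝ) 1, deriv (deriv w) x + lam * deriv f (u x) * w x = 0)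
    (hwbc1 : w (-1) = 0) (hwbc2 : w 1 = 0)
    (hweven : ∀ x ∈ Icc (-1:ℝ) 1, w (-x) = w x)
    (hw0 : deriv w 0 = 0)
    (hwnontriv : ∃ x ∈ Ioo (-1:ℝ) 1, w x ≠ 0) :
    (∀ x ∈ Ioo (-1:ℝ) 1, 0 < w x) ∨ (∀ x ∈ Ioo (-1:ℝ) 1, w x < 0) :=
  linearized_solution_one_sign_general lam mu f g u w hmu hf hg2 hgmono hu hueq hudec hw hweq hwbc2
    hweven hw0 hwnontriv
end

section
/- Let u be a positive singular solution of u'' + λ f(u) - μ g(x) = 0 on (-1,1) with u(±1) = 0 and u'(1) < 0, and let w > 0 on (-1,1) solve the linearized problem w'' + λ f'(u) w = 0, w(±1) = 0. Then ∫₀¹ f(u(x)) w(x) dx > 0. -/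
open Set Real Filter Topology MeasureTheory

/-!
Write `u'' = μ g - λ f(u)`. Integration by parts, using `u'(0) = 0` (evenness) and `w(1) = 0`,
gives `∫₀¹ (u'' w + u' w') = 0`. The Wronskian `W = u'' w - u' w'` of `u'` and `w` satisfies
`W' = μ g' w` by the two equations, so `(x W)' = W + x μ g' w ≥ W` on `(0,1)` and
`∫₀¹ W ≤ W(1) = -u'(1) w'(1)`. Adding the two relations yields
`2 μ ∫₀¹ g w + u'(1) w'(1) ≤ 2 λ ∫₀¹ f(u) w`. Here `∫₀¹ g w > 0` since `x g' ≥ 0` makes `g`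
increasing on `[0,1]` with `g(0) > 0`, and `u'(1) w'(1) ≥ 0` since `u'(1) < 0` while `w'(1) ≤ 0`
because `w ≥ 0` vanishes at `1`.
-/

section

variable {F : ℝ → ℝ} {a b x : ℝ}

theorem derivWithin_Icc_of_mem_Ioo (hx : x ∈ Ioo a b) : derivWithin F (Icc a b) x = deriv F x :=
  derivWithin_of_mem_nhds (Icc_mem_nhds hx.1 hx.2)

theorem ContDiffOn.hasDerivAt_derivWithin_Icc (hF : ContDiffOn ℝ 1 F (Icc a b))
    (hx : x ∈ Ioo a b) : HasDerivAt F (derivWithin F (Icc a b) x) x := by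
  rw [derivWithin_Icc_of_mem_Ioo hx]
  exact ((hF.differentiableOn one_ne_zero).differentiableAt (Icc_mem_nhds hx.1 hx.2)).hasDerivAt

theorem ContDiffOn.hasDerivAt_derivWithin_Icc_deriv_deriv (hF : ContDiffOn ℝ 2 F (Icc a b))
    (hx : x ∈ Ioo a b) : HasDerivAt (derivWithin F (Icc a b)) (deriv (deriv F) x) x := by
  have hF' : ContDiffOn ℝ 1 (derivWithin F (Icc a b)) (Icc a b) :=
    hF.derivWithin (uniqueDiffOn_Icc (hx.1.trans hx.2)) (by norm_num)
  have hderiv : derivWithin F (Icc a b) =ᶠ[𝓝 x] deriv F :=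
    eventually_of_mem (isOpen_Ioo.mem_nhds hx) fun y hy ↦ derivWithin_Icc_of_mem_Ioo hy
  rw [← hderiv.deriv_eq, ← derivWithin_Icc_of_mem_Ioo hx]
  exact hF'.hasDerivAt_derivWithin_Icc hx

theorem IsMinOn.derivWithin_Icc_right_nonpos (hab : a < b) (h : IsMinOn F (Ioo a b) b) :
    derivWithin F (Icc a b) b ≤ 0 := by
  have hmin : IsLocalMinOn F (Icc a b) b := by
    have hIoc : IsMinOn F (Ioc a b) b := fun y hy ↦
      hy.2.eq_or_lt.elim (fun hyb ↦ by simp [hyb]) (fun hyb ↦ h ⟨hy.1, hyb⟩)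
    refine IsMinFilter.filter_mono hIoc (le_principal_iff.mpr ?_)
    rw [nhdsWithin_Icc_eq_nhdsLE hab]
    exact Ioc_mem_nhdsLE hab
  have hcone : a - b ∈ posTangentConeAt (Icc a b) b := by
    refine mem_posTangentConeAt_of_segment_subset ?_
    rw [add_sub_cancel, segment_symm, segment_eq_Icc hab.le]
  have := hmin.fderivWithin_nonneg hcone
  rw [show a - b = (a - b) • (1 : ℝ) by simp, map_smul, smul_eq_mul] at this
  exact nonpos_of_mul_nonneg_right this (by linarith)

end

theorem deriv_zero_eq_zero_of_even {F : ℝ → ℝ} (h : (fun x ↦ F (-x)) =ᶠ[𝓝 0] F) :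
    deriv F 0 = 0 := by
  have := h.deriv_eq
  rw [deriv_comp_neg, neg_zero] at this
  linarith

theorem HasDerivAt.wronskian {v v' W W' : ℝ → ℝ} {c h x : ℝ}
    (hv : HasDerivAt v (v' x) x) (hv' : HasDerivAt v' (h - c * v x) x)
    (hW : HasDerivAt W (W' x) x) (hW' : HasDerivAt W' (-(c * W x)) x) :
    HasDerivAt (fun y ↦ v' y * W y - v y * W' y) (h * W x) x :=
  ((hv'.mul hW).sub (hv.mul hW')).congr_deriv (by ring)

section

variable {b : ℝ}

theorem integral_mul_pos_of_mul_deriv_nonneg {g w : ℝ → ℝ} (hb : 0 < b)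
    (hg : ContinuousOn g (Icc 0 b)) (hgd : DifferentiableOn ℝ g (Ioo 0 b))
    (hg' : ∀ x ∈ Ioo 0 b, 0 ≤ x * deriv g x) (hg0 : 0 < g 0)
    (hw : ContinuousOn w (Icc 0 b)) (hwpos : ∀ x ∈ Ioo 0 b, 0 < w x) :
    0 < ∫ x in 0..b, g x * w x := by
  have hgmono : MonotoneOn g (Icc 0 b) :=
    monotoneOn_of_deriv_nonneg (convex_Icc 0 b) hg (by rwa [interior_Icc])
      (fun x hx ↦ by rw [interior_Icc] at hx; exact nonneg_of_mul_nonneg_right (hg' x hx) hx.1)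
  refine intervalIntegral.intervalIntegral_pos_of_pos_on
    ((hg.mul hw).intervalIntegrable_of_Icc hb.le) (fun x hx ↦ mul_pos ?_ (hwpos x hx)) hb
  exact hg0.trans_le (hgmono (left_mem_Icc.2 hb.le) (Ioo_subset_Icc_self hx) hx.1.le)

theorem integral_le_mul_of_mul_deriv_nonneg {G G' : ℝ → ℝ} (hb : 0 ≤ b)
    (hG : ContinuousOn G (Icc 0 b)) (hderiv : ∀ x ∈ Ioo 0 b, HasDerivAt G (G' x) x)
    (hG' : ∀ x ∈ Ioo 0 b, 0 ≤ x * G' x) : ∫ x in 0..b, G x ≤ b * G b := by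
  have := intervalIntegral.sub_le_integral_of_hasDeriv_right_of_le hb
    (continuousOn_id.mul hG).neg
    (fun x hx ↦ ((hasDerivAt_id x).mul (hderiv x hx)).neg.hasDerivWithinAt)
    hG.neg.integrableOn_Icc (fun x hx ↦ by simpa using hG' x hx)
  simpa using this

theorem two_mul_integral_deriv_mul_le {v v' W W' r : ℝ → ℝ} (hb : 0 ≤ b)
    (hv : ContinuousOn v (Icc 0 b)) (hv' : ContinuousOn v' (Icc 0 b))
    (hW : ContinuousOn W (Icc 0 b)) (hW' : ContinuousOn W' (Icc 0 b))
    (hvd : ∀ x ∈ Ioo 0 b, HasDerivAt v (v' x) x) (hWd : ∀ x ∈ Ioo 0 b, HasDerivAt W (W' x) x)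
    (hwr : ∀ x ∈ Ioo 0 b, HasDerivAt (fun y ↦ v' y * W y - v y * W' y) (r x) x)
    (hr : ∀ x ∈ Ioo 0 b, 0 ≤ x * r x) (hv0 : v 0 = 0) (hWb : W b = 0) :
    2 * ∫ x in 0..b, v' x * W x ≤ -(b * (v b * W' b)) := by
  have hparts : ∫ x in 0..b, v' x * W x + v x * W' x = 0 := by
    rw [intervalIntegral.integral_deriv_mul_eq_sub_of_hasDerivAt (by rwa [uIcc_of_le hb])
      (by rwa [uIcc_of_le hb]) (by simpa [hb] using hvd) (by simpa [hb] using hWd)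
      (hv'.intervalIntegrable_of_Icc hb) (hW'.intervalIntegrable_of_Icc hb), hv0, hWb]
    ring
  have hwronskian : ∫ x in 0..b, v' x * W x - v x * W' x ≤ b * (v' b * W b - v b * W' b) :=
    integral_le_mul_of_mul_deriv_nonneg hb ((hv'.mul hW).sub (hv.mul hW')) hwr hr
  have hv'W : IntervalIntegrable (fun x ↦ v' x * W x) volume 0 b :=
    (hv'.mul hW).intervalIntegrable_of_Icc hb
  have hvW' : IntervalIntegrable (fun x ↦ v x * W' x) volume 0 b :=
    (hv.mul hW').intervalIntegrable_of_Icc hb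
  rw [intervalIntegral.integral_add hv'W hvW'] at hparts
  rw [intervalIntegral.integral_sub hv'W hvW', hWb] at hwronskian
  linarith

theorem two_mul_integral_mul_add_le_of_ode {F F' h h' u w : ℝ → ℝ} (hb : 0 < b)
    (hF : ∀ s, HasDerivAt F (F' s) s) (hh : ContinuousOn h (Icc 0 b))
    (hhd : ∀ x ∈ Ioo 0 b, HasDerivAt h (h' x) x) (hh' : ∀ x ∈ Ioo 0 b, 0 ≤ x * h' x)
    (hu : ContDiffOn ℝ 2 u (Icc 0 b)) (hw : ContDiffOn ℝ 2 w (Icc 0 b))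
    (hueq : ∀ x ∈ Ioo 0 b, deriv (deriv u) x = h x - F (u x))
    (hweq : ∀ x ∈ Ioo 0 b, deriv (deriv w) x = -(F' (u x) * w x))
    (hw_nonneg : ∀ x ∈ Ioo 0 b, 0 ≤ w x) (hu'0 : derivWithin u (Icc 0 b) 0 = 0) (hwb : w b = 0) :
    2 * (∫ x in 0..b, h x * w x) + b * (derivWithin u (Icc 0 b) b * derivWithin w (Icc 0 b) b) ≤
      2 * ∫ x in 0..b, F (u x) * w x := by
  have hI : UniqueDiffOn ℝ (Icc 0 b) := uniqueDiffOn_Icc hb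
  have hud : ∀ x ∈ Ioo 0 b, HasDerivAt u (derivWithin u (Icc 0 b) x) x := fun x hx ↦
    (hu.of_le one_le_two).hasDerivAt_derivWithin_Icc hx
  have hwd : ∀ x ∈ Ioo 0 b, HasDerivAt w (derivWithin w (Icc 0 b) x) x := fun x hx ↦
    (hw.of_le one_le_two).hasDerivAt_derivWithin_Icc hx
  have hu'd : ∀ x ∈ Ioo 0 b, HasDerivAt (derivWithin u (Icc 0 b)) (h x - F (u x)) x :=
    fun x hx ↦ hueq x hx ▸ hu.hasDerivAt_derivWithin_Icc_deriv_deriv hx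
  have hw'd : ∀ x ∈ Ioo 0 b, HasDerivAt (derivWithin w (Icc 0 b)) (-(F' (u x) * w x)) x :=
    fun x hx ↦ hweq x hx ▸ hw.hasDerivAt_derivWithin_Icc_deriv_deriv hx
  have hu''d : ∀ x ∈ Ioo 0 b, HasDerivAt (fun y ↦ h y - F (u y))
      (h' x - F' (u x) * derivWithin u (Icc 0 b) x) x :=
    fun x hx ↦ (hhd x hx).sub ((hF (u x)).comp x (hud x hx))
  have hFu : ContinuousOn (fun y ↦ F (u y)) (Icc 0 b) :=
    (continuous_iff_continuousAt.2 fun s ↦ (hF s).continuousAt).comp_continuousOn hu.continuousOn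
  have key := two_mul_integral_deriv_mul_le hb.le (hu.continuousOn_derivWithin hI one_le_two)
    (hh.sub hFu) hw.continuousOn (hw.continuousOn_derivWithin hI one_le_two) hu'd hwd
    (fun x hx ↦ (hu'd x hx).wronskian (hu''d x hx) (hwd x hx) (hw'd x hx))
    (fun x hx ↦ (mul_assoc x _ _).symm ▸ mul_nonneg (hh' x hx) (hw_nonneg x hx)) hu'0 hwb
  have hhw : IntervalIntegrable (fun x ↦ h x * w x) volume 0 b :=
    (hh.mul hw.continuousOn).intervalIntegrable_of_Icc hb.le
  have hFuw : IntervalIntegrable (fun x ↦ F (u x) * w x) volume 0 b :=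
    (hFu.mul hw.continuousOn).intervalIntegrable_of_Icc hb.le
  simp only [Pi.sub_apply, sub_mul] at key
  rw [intervalIntegral.integral_sub hhw hFuw] at key
  linarith

end

theorem transversality_integral_positive_general
    (lam mu : ℝ) (f g u w : ℝ → ℝ)
    (hlam : 0 < lam) (hmu : 0 < mu)
    (hf : ContDiff ℝ 1 f)
    (hg1 : ContinuousOn g (Icc (-1) 1))
    (hg2 : ContDiffOn ℝ 1 g (Ioo (-1) 1))
    (hg0 : 0 < g 0)
    (hgmono : ∀ x ∈ Ioo (-1:ℝ) 1, 0 ≤ x * deriv g x)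
    (hu : ContDiffOn ℝ 2 u (Icc (-1) 1))
    (hueq : ∀ x ∈ Ioo (-1:ℝ) 1, deriv (deriv u) x + lam * f (u x) - mu * g x = 0)
    (hueven : ∀ x ∈ Icc (-1:ℝ) 1, u (-x) = u x)
    (hu1 : deriv u 1 < 0)
    (hw : ContDiffOn ℝ 2 w (Icc (-1) 1))
    (hwpos : ∀ x ∈ Ioo (-1:ℝ) 1, 0 < w x)
    (hweq : ∀ x ∈ Ioo (-1:ℝ) 1, deriv (deriv w) x + lam * deriv f (u x) * w x = 0)
    (hwbc2 : w 1 = 0) :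
    0 < ∫ x in (0:ℝ)..1, f (u x) * w x := by
  have hIcc : Icc (0:ℝ) 1 ⊆ Icc (-1) 1 := Icc_subset_Icc (by norm_num) le_rfl
  have hIoo : Ioo (0:ℝ) 1 ⊆ Ioo (-1) 1 := Ioo_subset_Ioo (by norm_num) le_rfl
  have hI : UniqueDiffOn ℝ (Icc (0:ℝ) 1) := uniqueDiffOn_Icc zero_lt_one
  have hg : DifferentiableOn ℝ g (Ioo 0 1) := (hg2.differentiableOn one_ne_zero).mono hIoo
  have hmem0 : Icc (-1:ℝ) 1 ∈ 𝓝 0 := Icc_mem_nhds (by norm_num) (by norm_num)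
  have hu'0 : derivWithin u (Icc 0 1) 0 = 0 :=
    (((hu.differentiableOn two_ne_zero).differentiableAt hmem0).derivWithin
      (hI 0 (left_mem_Icc.2 zero_le_one))).trans
    (deriv_zero_eq_zero_of_even (eventually_of_mem hmem0 hueven))
  have hu'1 : derivWithin u (Icc 0 1) 1 < 0 :=
    ((differentiableAt_of_deriv_ne_zero hu1.ne).derivWithin
      (hI 1 (right_mem_Icc.2 zero_le_one))).trans_lt hu1
  have hw'1 : derivWithin w (Icc 0 1) 1 ≤ 0 := IsMinOn.derivWithin_Icc_right_nonpos zero_lt_one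
    fun x hx ↦ by simpa [hwbc2] using (hwpos x (hIoo hx)).le
  have hkey := two_mul_integral_mul_add_le_of_ode (h := fun x ↦ mu * g x) zero_lt_one
    (fun s ↦ (hf.differentiable one_ne_zero s).hasDerivAt.const_mul lam)
    (continuousOn_const.mul (hg1.mono hIcc))
    (fun x hx ↦ (hg.differentiableAt (isOpen_Ioo.mem_nhds hx)).hasDerivAt.const_mul mu)
    (fun x hx ↦ by simpa [mul_left_comm] using mul_nonneg hmu.le (hgmono x (hIoo hx)))
    (hu.mono hIcc) (hw.mono hIcc) (fun x hx ↦ by linarith [hueq x (hIoo hx)])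
    (fun x hx ↦ by linarith [hweq x (hIoo hx)]) (fun x hx ↦ (hwpos x (hIoo hx)).le) hu'0 hwbc2
  have hgw : 0 < ∫ x in (0:ℝ)..1, g x * w x := integral_mul_pos_of_mul_deriv_nonneg zero_lt_one
    (hg1.mono hIcc) hg (fun x hx ↦ hgmono x (hIoo hx)) hg0 (hw.continuousOn.mono hIcc)
    (fun x hx ↦ hwpos x (hIoo hx))
  simp only [mul_assoc, intervalIntegral.integral_const_mul] at hkey
  refine pos_of_mul_pos_right (a := lam) ?_ hlam.le
  nlinarith [mul_pos hmu hgw, mul_nonneg_of_nonpos_of_nonpos hu'1.le hw'1]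

theorem transversality_integral_positive
    (lam mu : ℝ) (f g u w : ℝ → ℝ)
    (hlam : 0 < lam) (hmu : 0 < mu)
    (hf : ContDiff ℝ 1 f)
    (hg1 : ContinuousOn g (Icc (-1) 1))
    (hg2 : ContDiffOn ℝ 1 g (Ioo (-1) 1))
    (hgeven : ∀ x ∈ Ioo (-1:ℝ) 1, g (-x) = g x)
    (hg0 : 0 < g 0)
    (hgmono : ∀ x ∈ Ioo (-1:ℝ) 1, 0 ≤ x * deriv g x)
    (hu : ContDiffOn ℝ 2 u (Icc (-1) 1))
    (hupos : ∀ x ∈ Ioo (-1:ℝ) 1, 0 < u x)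
    (hueq : ∀ x ∈ Ioo (-1:ℝ) 1, deriv (deriv u) x + lam * f (u x) - mu * g x = 0)
    (hubc1 : u (-1) = 0) (hubc2 : u 1 = 0)
    (hueven : ∀ x ∈ Icc (-1:ℝ) 1, u (-x) = u x)
    (hudec : ∀ x ∈ Ioc (0:ℝ) 1, deriv u x < 0)
    (hu1 : deriv u 1 < 0)
    (hw : ContDiffOn ℝ 2 w (Icc (-1) 1))
    (hwpos : ∀ x ∈ Ioo (-1:ℝ) 1, 0 < w x)
    (hweq : ∀ x ∈ Ioo (-1:ℝ) 1, deriv (deriv w) x + lam * deriv f (u x) * w x = 0)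
    (hwbc1 : w (-1) = 0) (hwbc2 : w 1 = 0)
    (hweven : ∀ x ∈ Icc (-1:ℝ) 1, w (-x) = w x)
    (hw0 : deriv w 0 = 0) :
    0 < ∫ x in (0:ℝ)..1, f (u x) * w x :=
  transversality_integral_positive_general lam mu f g u w hlam hmu hf hg1 hg2 hg0 hgmono hu hueq
    hueven hu1 hw hwpos hweq hwbc2
end

section
/- The problem u'' + λ u(1-u) - μ = 0 on (-1,1), u(-1) = u(1) = 0, with λ > 0 and μ > 0, has no positive solution when λ ≤ π²/4. -/
/-!
Multiply by the principal eigenfunction `φ x = cos (π x / 2)` through the Wronskian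
`W = u' φ - u φ'`. Since `φ'' = -(π²/4) φ`, we get `W' = (u'' + (π²/4) u) φ
= (μ + (π²/4 - λ) u + λ u²) φ > 0` on `(-1, 1)`, so `W` is strictly increasing on `[-1, 1]`;
but `W` vanishes at both endpoints because `u` and `φ` do.
-/

open Set Real Filter Topology

/-- The Wronskian `u' φ - u φ'` of `u` against `φ x = cos (k x)`, given a derivative `u'` of `u`. -/
noncomputable def cosWronskian (k : ℝ) (u u' : ℝ → ℝ) (x : ℝ) : ℝ :=
  u' x * cos (k * x) + k * u x * sin (k * x)

theorem hasDerivAt_cosWronskian {k u'' x : ℝ} {u u' : ℝ → ℝ}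
    (hu : HasDerivAt u (u' x) x) (hu' : HasDerivAt u' u'' x) :
    HasDerivAt (cosWronskian k u u') ((u'' + k ^ 2 * u x) * cos (k * x)) x := by
  have hkx : HasDerivAt (fun y => k * y) k x := by
    simpa using (hasDerivAt_id x).const_mul k
  exact ((hu'.mul hkx.cos).add ((hu.const_mul k).mul hkx.sin)).congr_deriv (by ring)

theorem continuousOn_cosWronskian {k : ℝ} {u u' : ℝ → ℝ} {s : Set ℝ}
    (hu : ContinuousOn u s) (hu' : ContinuousOn u' s) :
    ContinuousOn (cosWronskian k u u') s := by
  unfold cosWronskian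
  fun_prop

theorem cosWronskian_eq_zero {k x : ℝ} {u u' : ℝ → ℝ} (hu : u x = 0) (hcos : cos (k * x) = 0) :
    cosWronskian k u u' x = 0 := by
  simp [cosWronskian, hu, hcos]

theorem ContDiffOn.hasDerivAt_derivWithin {u : ℝ → ℝ} {s : Set ℝ} {x : ℝ}
    (hu : ContDiffOn ℝ 2 u s) (hs : s ∈ 𝓝 x) :
    HasDerivAt (derivWithin u s) (deriv (deriv u) x) x := by
  have hx : interior s ∈ 𝓝 x := isOpen_interior.mem_nhds (mem_interior_iff_mem_nhds.mpr hs)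
  have hu' : ContDiffOn ℝ 1 (deriv u) (interior s) :=
    (hu.mono interior_subset).deriv_of_isOpen isOpen_interior (by norm_num)
  have heq : derivWithin u s =ᶠ[𝓝 x] deriv u := by
    filter_upwards [hx] with y hy
    exact derivWithin_of_mem_nhds (mem_interior_iff_mem_nhds.mp hy)
  exact ((hu'.differentiableOn one_ne_zero).differentiableAt hx).hasDerivAt.congr_of_eventuallyEq
    heq

theorem cos_pi_div_two_mul_pos {x : ℝ} (hx : x ∈ Ioo (-1 : ℝ) 1) : 0 < cos (π / 2 * x) := by
  apply cos_pos_of_mem_Ioo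
  constructor <;> nlinarith [hx.1, hx.2, pi_pos]

theorem no_positive_solution_below_principal_eigenvalue
    (lam mu : ℝ) (u : ℝ → ℝ)
    (hlam : 0 < lam) (hmu : 0 < mu)
    (hlam_le : lam ≤ Real.pi ^ 2 / 4)
    (hu : ContDiffOn ℝ 2 u (Icc (-1) 1))
    (hupos : ∀ x ∈ Ioo (-1:ℝ) 1, 0 < u x)
    (hueq : ∀ x ∈ Ioo (-1:ℝ) 1,
      deriv (deriv u) x + lam * u x * (1 - u x) - mu = 0)
    (hubc1 : u (-1) = 0) (hubc2 : u 1 = 0) :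
    False := by
  set W := cosWronskian (π / 2) u (derivWithin u (Icc (-1) 1))
  have hW_cont : ContinuousOn W (Icc (-1) 1) :=
    continuousOn_cosWronskian hu.continuousOn
      (hu.continuousOn_derivWithin (uniqueDiffOn_Icc (by norm_num)) (by norm_num))
  have hW_deriv : ∀ x ∈ interior (Icc (-1 : ℝ) 1), 0 < deriv W x := by
    intro x hx
    rw [interior_Icc] at hx
    have hs : Icc (-1 : ℝ) 1 ∈ 𝓝 x := Icc_mem_nhds hx.1 hx.2
    have hu_x : HasDerivAt u (derivWithin u (Icc (-1) 1) x) x := by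
      rw [derivWithin_of_mem_nhds hs]
      exact (hu.differentiableOn two_ne_zero).hasDerivAt hs
    rw [(hasDerivAt_cosWronskian hu_x (hu.hasDerivAt_derivWithin hs)).deriv]
    have hux := hupos x hx
    have hcoef : 0 < deriv (deriv u) x + (π / 2) ^ 2 * u x := by
      nlinarith [hueq x hx, mul_pos hlam (mul_pos hux hux)]
    exact mul_pos hcoef (cos_pi_div_two_mul_pos hx)
  have hW_left : W (-1) = 0 :=
    cosWronskian_eq_zero hubc1 (by rw [mul_neg_one, cos_neg, cos_pi_div_two])
  have hW_right : W 1 = 0 := cosWronskian_eq_zero hubc2 (by rw [mul_one, cos_pi_div_two])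
  have hW_lt := strictMonoOn_of_deriv_pos (convex_Icc (-1) 1) hW_cont hW_deriv
    (left_mem_Icc.mpr (by norm_num)) (right_mem_Icc.mpr (by norm_num)) (by norm_num)
  rw [hW_left, hW_right] at hW_lt
  exact lt_irrefl 0 hW_lt
end
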